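/- Let μ be a Borel probability measure on a metric space X and d ≥ 0. If the lower pointwise dimension satisfies liminf_{ρ→0} log μ(B(x,ρ))/log ρ ≥ d for μ-a.e. x, then the Hausdorff dimension of μ, defined as inf{dim_H Z : Z Borel, μ(X∖Z)=0}, is at least d. -/

import Mathlib

open MeasureTheory Filter Metric Set
open scoped ENNReal Topology

/-!
Fix `s < d`. For a.e. `x`, `μ (ball x r) ≤ r ^ s` for all small `r`. Since `x ↦ μ (ball x r)`
is lower semicontinuous, the points where this holds for all `r < 1 / (k + 1)` form a closed set
`A k`; these sets exhaust almost everything, so a non-null `Z` meets some `A k` in a non-null set.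
Covering `Z ∩ A k` by sets `E` of small diameter, each `E` meeting `A k` lies in a ball of radius
just above `diam E` centred in `A k`, whence `μ (E ∩ A k) ≤ (diam E) ^ s`. Thus `μ` restricted
to `A k` is dominated by `μH[s]`, so `μH[s] Z > 0` and `dimH Z ≥ s`.
-/

lemma Real.eventually_lt_of_lt_liminf_of_nonneg {α : Type*} {l : Filter α} {u : α → ℝ}
    {b : ℝ} (hb : 0 ≤ b) (h : b < liminf u l) : ∀ᶠ a in l, b < u a := by
  refine eventually_lt_of_lt_liminf h ?_
  by_contra hu
  rw [Real.liminf_of_not_isBoundedUnder hu] at h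
  exact hb.not_gt h

/-- Since `Real.log 0 = 0`, a positive lower bound on `log a / log r` also rules out `a = 0` and
`a = ∞`. -/
lemma ENNReal.le_ofReal_rpow_of_lt_log_div_log {a : ℝ≥0∞} {r s : ℝ} (hr₀ : 0 < r)
    (hr₁ : r < 1) (hs : 0 ≤ s) (h : s < Real.log a.toReal / Real.log r) :
    a ≤ ENNReal.ofReal r ^ s := by
  have hlog_r : Real.log r < 0 := Real.log_neg hr₀ hr₁
  have ha : 0 < a.toReal := by
    refine ENNReal.toReal_nonneg.lt_of_ne fun ha => ?_
    rw [← ha, Real.log_zero, zero_div] at h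
    exact hs.not_gt h
  have hlt : a.toReal < r ^ s := by
    calc a.toReal = Real.exp (Real.log a.toReal) := (Real.exp_log ha).symm
      _ < Real.exp (Real.log r * s) :=
        Real.exp_lt_exp.2 (by rw [mul_comm]; exact (lt_div_iff_of_neg hlog_r).1 h)
      _ = r ^ s := (Real.rpow_def_of_pos hr₀ s).symm
  rw [ENNReal.ofReal_rpow_of_pos hr₀,
    ← ENNReal.ofReal_toReal (ENNReal.toReal_pos_iff.1 ha).2.ne]
  exact ENNReal.ofReal_le_ofReal hlt.le

lemma eventually_le_rpow_of_lt_liminf_log_div_log {f : ℝ → ℝ≥0∞} {s : ℝ} (hs : 0 ≤ s)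
    (h : s < liminf (fun r => Real.log (f r).toReal / Real.log r) (𝓝[>] 0)) :
    ∀ᶠ r in 𝓝[>] 0, f r ≤ ENNReal.ofReal r ^ s := by
  filter_upwards [Real.eventually_lt_of_lt_liminf_of_nonneg hs h, Ioo_mem_nhdsGT zero_lt_one]
    with r hr hr₀₁
  exact ENNReal.le_ofReal_rpow_of_lt_log_div_log hr₀₁.1 hr₀₁.2 hs hr

section MetricSpace

variable {X : Type*} [MetricSpace X] [MeasurableSpace X]

lemma lowerSemicontinuous_measure_ball (μ : Measure X) (r : ℝ) :
    LowerSemicontinuous fun x => μ (ball x r) := by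
  intro x c hc
  have hmono : Monotone fun n : ℕ => ball x (r - 1 / (n + 1)) := fun m n hmn =>
    ball_subset_ball (by gcongr)
  have hunion : ⋃ n : ℕ, ball x (r - 1 / (n + 1)) = ball x r := by
    ext y
    simp only [mem_iUnion, mem_ball]
    refine ⟨fun ⟨n, hn⟩ => hn.trans_le (sub_le_self _ Nat.one_div_pos_of_nat.le),
      fun hy => ?_⟩
    obtain ⟨n, hn⟩ := exists_nat_one_div_lt (sub_pos.2 hy)
    exact ⟨n, by linarith⟩
  have hc' : c < μ (⋃ n : ℕ, ball x (r - 1 / (n + 1))) := by rwa [hunion]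
  obtain ⟨n, hn⟩ := ((tendsto_measure_iUnion_atTop hmono).eventually (lt_mem_nhds hc')).exists
  filter_upwards [ball_mem_nhds x (Nat.one_div_pos_of_nat (n := n))] with y hy
  exact hn.trans_le (measure_mono (ball_subset_ball' (by linarith [mem_ball'.1 hy])))

lemma isClosed_setOf_forall_measure_ball_le (μ : Measure X) (s δ : ℝ) :
    IsClosed {x | ∀ r ∈ Ioo 0 δ, μ (ball x r) ≤ ENNReal.ofReal r ^ s} := by
  simp only [ofPred_forall]
  exact isClosed_biInter fun r _ => (lowerSemicontinuous_measure_ball μ r).isClosed_preimage _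

variable [BorelSpace X]

theorem restrict_le_hausdorffMeasure_of_forall_measure_ball_le {μ : Measure X} {S : Set X}
    (hS : MeasurableSet S) {s δ : ℝ} (hδ : 0 < δ)
    (h : ∀ x ∈ S, ∀ r ∈ Ioo 0 δ, μ (ball x r) ≤ ENNReal.ofReal r ^ s) :
    μ.restrict S ≤ μH[s] := by
  refine Measure.le_hausdorffMeasure s _ (ENNReal.ofReal (δ / 2)) (by simpa using hδ)
    fun E hE => ?_
  rw [Measure.restrict_apply' hS]
  rcases (E ∩ S).eq_empty_or_nonempty with hempty | ⟨x, hxE, hxS⟩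
  · simp [hempty]
  have hE_top : ediam E ≠ ⊤ := ne_top_of_le_ne_top ENNReal.ofReal_ne_top hE
  have hdiam : ediam E = ENNReal.ofReal (diam E) := (ENNReal.ofReal_toReal hE_top).symm
  have hδ' : diam E < δ := by
    rw [hdiam, ENNReal.ofReal_le_ofReal_iff (by positivity)] at hE
    linarith
  have hlim : Tendsto (fun r => ENNReal.ofReal r ^ s) (𝓝[>] (diam E))
      (𝓝 (ENNReal.ofReal (diam E) ^ s)) :=
    ((ENNReal.continuous_rpow_const.comp ENNReal.continuous_ofReal).tendsto _).mono_left
      nhdsWithin_le_nhds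
  rw [hdiam]
  refine ge_of_tendsto hlim ?_
  filter_upwards [Ioo_mem_nhdsGT hδ'] with r hr
  calc μ (E ∩ S) ≤ μ (ball x r) := measure_mono fun y hy =>
        mem_ball.2 ((dist_le_diam_of_mem' hE_top hy.1 hxE).trans_lt hr.1)
    _ ≤ ENNReal.ofReal r ^ s := h x hxS r ⟨diam_nonneg.trans_lt hr.1, hr.2⟩

theorem hausdorffMeasure_ne_zero_of_ae_eventually_measure_ball_le {μ : Measure X} {Z : Set X}
    (hZ : μ Z ≠ 0) {s : ℝ}
    (h : ∀ᵐ x ∂μ, ∀ᶠ r in 𝓝[>] 0, μ (ball x r) ≤ ENNReal.ofReal r ^ s) :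
    μH[s] Z ≠ 0 := by
  set A : ℕ → Set X := fun k =>
    {x | ∀ r ∈ Ioo (0 : ℝ) (1 / (k + 1)), μ (ball x r) ≤ ENNReal.ofReal r ^ s}
  have hcover : ∀ᵐ x ∂μ, ∃ k, x ∈ A k := by
    filter_upwards [h] with x hx
    obtain ⟨δ, hδ, hball⟩ := (nhdsGT_basis (0 : ℝ)).eventually_iff.1 hx
    obtain ⟨k, hk⟩ := exists_nat_one_div_lt hδ
    exact ⟨k, fun r hr => hball ⟨hr.1, hr.2.trans hk⟩⟩
  obtain ⟨k, hk⟩ : ∃ k, μ (Z ∩ A k) ≠ 0 := by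
    by_contra! hnull
    refine hZ (measure_mono_null_ae ?_ (measure_iUnion_null hnull))
    filter_upwards [hcover] with x ⟨k, hk⟩ hxZ
    exact mem_iUnion.2 ⟨k, hxZ, hk⟩
  have hA : MeasurableSet (A k) := (isClosed_setOf_forall_measure_ball_le μ s _).measurableSet
  have hle := restrict_le_hausdorffMeasure_of_forall_measure_ball_le hA Nat.one_div_pos_of_nat
    fun x hx => hx
  refine ne_bot_of_le_ne_bot hk ?_
  calc μ (Z ∩ A k) = μ.restrict (A k) (Z ∩ A k) := by
        rw [Measure.restrict_apply' hA, inter_assoc, inter_self]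
    _ ≤ μH[s] (Z ∩ A k) := Measure.le_iff'.1 hle _
    _ ≤ μH[s] Z := measure_mono inter_subset_left

end MetricSpace

theorem stmt_9_general
    {X : Type*} [MetricSpace X] [MeasurableSpace X] [BorelSpace X]
    (μ : Measure X) [IsProbabilityMeasure μ]
    (d : ℝ)
    (hlower : ∀ᵐ x ∂μ, (d : ℝ) ≤
      liminf (fun r : ℝ => Real.log (μ (ball x r)).toReal / Real.log r)
        (nhdsWithin 0 (Set.Ioi 0))) :
    ENNReal.ofReal d ≤
      ⨅ (Z : Set X) (_ : MeasurableSet Z) (_ : μ Zᶜ = 0), dimH Z := by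
  refine le_iInf₂ fun Z _ => le_iInf fun hZc => le_of_forall_lt fun c hc => ?_
  obtain ⟨s, hcs, hsd⟩ := ENNReal.lt_iff_exists_nnreal_btwn.1 hc
  have hZ : μ Z ≠ 0 := fun hZ => by simpa using measure_union_null hZ hZc
  have hball : ∀ᵐ x ∂μ, ∀ᶠ r in 𝓝[>] 0, μ (ball x r) ≤ ENNReal.ofReal r ^ (s : ℝ) :=
    hlower.mono fun x hx =>
      eventually_le_rpow_of_lt_liminf_log_div_log s.2
        ((ENNReal.coe_lt_ofReal.1 hsd).trans_le hx)
  exact hcs.trans_le <| le_dimH_of_hausdorffMeasure_ne_zero <|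
    hausdorffMeasure_ne_zero_of_ae_eventually_measure_ball_le hZ hball

/-- Mass distribution principle: if the lower pointwise dimension of `μ` is at least `d`
almost everywhere, then the Hausdorff dimension of `μ` is at least `d`. -/
theorem stmt_9
    {X : Type*} [MetricSpace X] [MeasurableSpace X] [BorelSpace X]
    (μ : Measure X) [IsProbabilityMeasure μ]
    (d : ℝ) (hd : 0 ≤ d)
    (hlower : ∀ᵐ x ∂μ, (d : ℝ) ≤
      liminf (fun r : ℝ => Real.log (μ (ball x r)).toReal / Real.log r)
        (nhdsWithin 0 (Set.Ioi 0))) :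
    ENNReal.ofReal d ≤
      ⨅ (Z : Set X) (_ : MeasurableSet Z) (_ : μ Zᶜ = 0), dimH Z :=
  stmt_9_general μ d hlower
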